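/- Let W^{a'b'} and W^{a''b''} both be copies of the two-party qubit process W = (d_O/2)(ω^{x₁} ⊗ ρ_∼^{x₂y₁} ⊗ ω^{y₂} + ω^{x₂} ⊗ ρ_∼^{x₁y₂} ⊗ ω^{y₁}), with ω = 𝟙/2 and ρ_∼ = (𝟙⊗𝟙 + σ₃⊗σ₃)/4. Then the tensor product W^{a'b'} ⊗ W^{a''b''}, regarded as an operator for the combined parties A = A'A'' and B = B'B'', has a nonzero coefficient on the Pauli term σ₃^{a₂'} ⊗ σ₃^{a₁''} ⊗ σ₃^{b₁'} ⊗ σ₃^{b₂''}, which is a term of type a₁a₂b₁b₂ (in type on neither combined party); consequently W^{a'b'} ⊗ W^{a''b''} is not a valid process. -/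
import Mathlib


open Matrix Kronecker BigOperators
open scoped ComplexOrder

namespace ProcessPaper

/-- A (generalized) Hilbert–Schmidt basis of operators on a finite-dimensional Hilbert
space with orthonormal basis indexed by `n`: a family of Hermitian matrices indexed by
`ι` (with `Fintype.card ι = (Fintype.card n) ^ 2`), whose distinguished element `σ 0`
is the identity, whose other elements are traceless, which are mutually orthogonal
under the trace inner product, and which are all nonzero. -/
def IsHSBasis {n : Type*} [Fintype n] [DecidableEq n] {ι : Type*} [Fintype ι] [Zero ι]
    (σ : ι → Matrix n n ℂ) : Prop :=
  Fintype.card ι = (Fintype.card n) ^ 2 ∧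
  (∀ i, (σ i).IsHermitian) ∧
  σ 0 = 1 ∧
  (∀ i, i ≠ 0 → (σ i).trace = 0) ∧
  (∀ i j, i ≠ j → (σ i * σ j).trace = 0) ∧
  (∀ i, σ i ≠ 0)

variable {P : Type*} [Fintype P] [DecidableEq P]

section defs

variable {I O : P → Type*} [∀ p, Fintype (I p)] [∀ p, DecidableEq (I p)]
  [∀ p, Fintype (O p)] [∀ p, DecidableEq (O p)]
  {ιI ιO : P → Type*} [∀ p, Fintype (ιI p)] [∀ p, Zero (ιI p)]
  [∀ p, Fintype (ιO p)] [∀ p, Zero (ιO p)]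

/-- The tensor product, over all parties, of party-local operators
(each party `p` carries the Hilbert space of its input system `I p`
tensored with its output system `O p`). -/
def tensorFamily (M : ∀ p, Matrix (I p × O p) (I p × O p) ℂ) :
    Matrix ((p : P) → I p × O p) ((p : P) → I p × O p) ℂ :=
  fun x y => ∏ p, M p (x p) (y p)

/-- The Hilbert–Schmidt basis term with multi-index `t`:
`⨂_p σI p (t p).1 ⊗ σO p (t p).2`. -/
def hsTerm (σI : ∀ p, ιI p → Matrix (I p) (I p) ℂ)
    (σO : ∀ p, ιO p → Matrix (O p) (O p) ℂ)
    (t : ∀ p, ιI p × ιO p) :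
    Matrix ((p : P) → I p × O p) ((p : P) → I p × O p) ℂ :=
  fun x y => ∏ p, σI p (t p).1 (x p).1 (y p).1 * σO p (t p).2 (x p).2 (y p).2

/-- The operator with Hilbert–Schmidt coefficients `w`. -/
noncomputable def expand (σI : ∀ p, ιI p → Matrix (I p) (I p) ℂ)
    (σO : ∀ p, ιO p → Matrix (O p) (O p) ℂ)
    (w : (∀ p, ιI p × ιO p) → ℝ) :
    Matrix ((p : P) → I p × O p) ((p : P) → I p × O p) ℂ :=
  ∑ t : ∀ p, ιI p × ιO p, (w t : ℂ) • hsTerm σI σO t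

end defs

section types

variable {ιI ιO : P → Type*} [∀ p, Zero (ιI p)] [∀ p, Zero (ιO p)]

/-- A term is trivial on party `p` if its indices on both the input and the output
system of `p` are zero (identity factor on party `p`). -/
def TrivialAt (t : ∀ p, ιI p × ιO p) (p : P) : Prop :=
  (t p).1 = 0 ∧ (t p).2 = 0

/-- A term is in type on party `p` if it is nontrivial on the input system of `p`
and trivial (identity) on the output system of `p`. -/
def InTypeAt (t : ∀ p, ιI p × ιO p) (p : P) : Prop :=
  (t p).1 ≠ 0 ∧ (t p).2 = 0

/-- A term includes the out type on party `p` if it is nontrivial on the output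
system of `p`. -/
def IncludesOutAt (t : ∀ p, ιI p × ιO p) (p : P) : Prop :=
  (t p).2 ≠ 0

/-- A term is nontrivial if it is nontrivial on some party
(i.e. it is not the identity term). -/
def NontrivialTerm (t : ∀ p, ιI p × ιO p) : Prop :=
  ∃ p, ¬ TrivialAt t p

/-- The Oreshkov–Giarmatzi condition on Hilbert–Schmidt coefficients: every nonzero
nontrivial term is in type on at least one party. -/
def OGCoeffs (w : (∀ p, ιI p × ιO p) → ℝ) : Prop :=
  ∀ t, w t ≠ 0 → NontrivialTerm t → ∃ p, InTypeAt t p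

end types

section process

variable {I O : P → Type*} [∀ p, Fintype (I p)] [∀ p, DecidableEq (I p)]
  [∀ p, Fintype (O p)] [∀ p, DecidableEq (O p)]
  {ιI ιO : P → Type*} [∀ p, Fintype (ιI p)] [∀ p, Zero (ιI p)]
  [∀ p, Fintype (ιO p)] [∀ p, Zero (ιO p)]

/-- `W` is a valid process with Hilbert–Schmidt coefficients `w` (relative to the
Hilbert–Schmidt bases `σI`, `σO`): it is positive semidefinite, has trace equal to the
product `d_O` of the output dimensions, has expansion given by `w`, and every nonzero
nontrivial Hilbert–Schmidt term of it is in type on at least one party. -/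
def IsProcessWith (σI : ∀ p, ιI p → Matrix (I p) (I p) ℂ)
    (σO : ∀ p, ιO p → Matrix (O p) (O p) ℂ)
    (W : Matrix ((p : P) → I p × O p) ((p : P) → I p × O p) ℂ)
    (w : (∀ p, ιI p × ιO p) → ℝ) : Prop :=
  W.PosSemidef ∧
  W.trace = ∏ p, (Fintype.card (O p) : ℂ) ∧
  W = expand σI σO w ∧
  OGCoeffs w

/-- `W` is a valid process (relative to the Hilbert–Schmidt bases `σI`, `σO`). -/
def IsProcess (σI : ∀ p, ιI p → Matrix (I p) (I p) ℂ)
    (σO : ∀ p, ιO p → Matrix (O p) (O p) ℂ)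
    (W : Matrix ((p : P) → I p × O p) ((p : P) → I p × O p) ℂ) : Prop :=
  ∃ w, IsProcessWith σI σO W w

end process

section product

variable {I' O' I'' O'' : P → Type*}

/-- The tensor product `P = W ⊗ Z` of an operator `W` for parties `A', B', …` and an
operator `Z` for parties `A'', B'', …`, regarded as an operator for the combined
parties `A = A'A''` (input `a₁ = a₁'a₁''`, output `a₂ = a₂'a₂''`), `B = B'B''`, …. -/
def prodOp (W : Matrix ((p : P) → I' p × O' p) ((p : P) → I' p × O' p) ℂ)
    (Z : Matrix ((p : P) → I'' p × O'' p) ((p : P) → I'' p × O'' p) ℂ) :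
    Matrix ((p : P) → (I' p × I'' p) × (O' p × O'' p))
      ((p : P) → (I' p × I'' p) × (O' p × O'' p)) ℂ :=
  fun x y =>
    W (fun p => ((x p).1.1, (x p).2.1)) (fun p => ((y p).1.1, (y p).2.1)) *
    Z (fun p => ((x p).1.2, (x p).2.2)) (fun p => ((y p).1.2, (y p).2.2))

end product

/-- The Hilbert–Schmidt basis of a combined system, consisting of the tensor (Kronecker)
products of the basis elements of the two subsystems; its distinguished (identity)
element is the product of the two distinguished elements. -/
def prodBasis {n n' ι ι' : Type*} (σ : ι → Matrix n n ℂ) (σ' : ι' → Matrix n' n' ℂ) :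
    ι × ι' → Matrix (n × n') (n × n') ℂ :=
  fun i => σ i.1 ⊗ₖ σ' i.2

section coeffs

variable {ιI' ιO' ιI'' ιO'' : P → Type*}

/-- The Hilbert–Schmidt coefficients of a tensor product `W ⊗ Z` in terms of the
coefficients `w` of `W` and `z` of `Z`. -/
def prodCoeffs (w : (∀ p, ιI' p × ιO' p) → ℝ) (z : (∀ p, ιI'' p × ιO'' p) → ℝ) :
    (∀ p, (ιI' p × ιI'' p) × (ιO' p × ιO'' p)) → ℝ :=
  fun u => w (fun p => ((u p).1.1, (u p).2.1)) * z (fun p => ((u p).1.2, (u p).2.2))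

/-- The multi-index of the tensor product of the term `t` of `W` and the term `s`
of `Z`, as a term for the combined parties. -/
def combineTerm (t : ∀ p, ιI' p × ιO' p) (s : ∀ p, ιI'' p × ιO'' p) :
    ∀ p, (ιI' p × ιI'' p) × (ιO' p × ιO'' p) :=
  fun p => (((t p).1, (s p).1), ((t p).2, (s p).2))

end coeffs

section twoparty

variable {ιI ιO : Fin 2 → Type*} [∀ p, Zero (ιI p)] [∀ p, Zero (ιO p)]

/-- For two parties `A` (party `0`) and `B` (party `1`), an `A` to `B` signalling
term: a term of type `a₂b₁` or `a₁a₂b₁`, i.e. nontrivial on `a₂` and on `b₁` and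
trivial on `b₂`. -/
def AtoBSig (t : ∀ p, ιI p × ιO p) : Prop :=
  (t 0).2 ≠ 0 ∧ (t 1).1 ≠ 0 ∧ (t 1).2 = 0

/-- A `B` to `A` signalling term: a term of type `a₁b₂` or `a₁b₁b₂`, i.e. nontrivial
on `b₂` and on `a₁` and trivial on `a₂`. -/
def BtoASig (t : ∀ p, ιI p × ιO p) : Prop :=
  (t 1).2 ≠ 0 ∧ (t 0).1 ≠ 0 ∧ (t 0).2 = 0

end twoparty

/-- The Pauli (Hilbert–Schmidt) basis `{𝟙, σ₁, σ₂, σ₃}` of qubit operators. -/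
noncomputable def pauli : Fin 4 → Matrix (Fin 2) (Fin 2) ℂ :=
  ![1, !![0, 1; 1, 0], !![0, -Complex.I; Complex.I, 0], !![1, 0; 0, -1]]

/-- The maximally mixed qubit state `ω = 𝟙/2`. -/
noncomputable def omega2 : Matrix (Fin 2) (Fin 2) ℂ := (2 : ℂ)⁻¹ • 1

/-- The maximally correlating two-qubit state `ρ_∼ = (𝟙⊗𝟙 + σ₃⊗σ₃)/4`. -/
noncomputable def rhoCorr2 : Matrix (Fin 2 × Fin 2) (Fin 2 × Fin 2) ℂ :=
  (4 : ℂ)⁻¹ • ((1 : Matrix (Fin 2) (Fin 2) ℂ) ⊗ₖ (1 : Matrix (Fin 2) (Fin 2) ℂ)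
    + pauli 3 ⊗ₖ pauli 3)

/-- The two-party qubit process
`W = (d_O/2) (ω^{x₁} ⊗ ρ_∼^{x₂y₁} ⊗ ω^{y₂} + ω^{x₂} ⊗ ρ_∼^{x₁y₂} ⊗ ω^{y₁})`
(`d_O = 4`), written as a matrix on the total Hilbert space of the two parties
`0 = X` (input `x₁`, output `x₂`) and `1 = Y` (input `y₁`, output `y₂`),
all four systems being qubits. -/
noncomputable def Wq :
    Matrix ((p : Fin 2) → Fin 2 × Fin 2) ((p : Fin 2) → Fin 2 × Fin 2) ℂ :=
  fun x y =>
    2 * (omega2 (x 0).1 (y 0).1 * rhoCorr2 ((x 0).2, (x 1).1) ((y 0).2, (y 1).1)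
          * omega2 (x 1).2 (y 1).2
       + omega2 (x 0).2 (y 0).2 * rhoCorr2 ((x 0).1, (x 1).2) ((y 0).1, (y 1).2)
          * omega2 (x 1).1 (y 1).1)

/-- The maximally mixed state `ω = 𝟙/4` of a 4-dimensional (two-qubit) system. -/
noncomputable def omega4 : Matrix (Fin 2 × Fin 2) (Fin 2 × Fin 2) ℂ := (4 : ℂ)⁻¹ • 1

/-- The maximally correlating state `ρ_∼ = (1/4) ∑_{i=0}^{3} |ii⟩⟨ii|` of two copies of a
4-dimensional (two-qubit) system, in the computational basis. -/
noncomputable def rhoCorr4 :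
    Matrix ((Fin 2 × Fin 2) × (Fin 2 × Fin 2)) ((Fin 2 × Fin 2) × (Fin 2 × Fin 2)) ℂ :=
  fun r c => if r.1 = r.2 ∧ c.1 = c.2 ∧ r.1 = c.1 then (4 : ℂ)⁻¹ else 0

/-- The two-party process
`W = (d_O/2) (ω^{a₁} ⊗ ρ_∼^{a₂b₁} ⊗ ω^{b₂} + ω^{a₂} ⊗ ρ_∼^{a₁b₂} ⊗ ω^{b₁})`
(`d_O = 16`) on the combined parties `0 = A = A'A''` and `1 = B = B'B''`, whose systems
`a₁ = a₁'a₁''` etc. are each two qubits: the first qubit of each pair is the primed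
system, the second the double-primed one. -/
noncomputable def W4 :
    Matrix ((p : Fin 2) → (Fin 2 × Fin 2) × (Fin 2 × Fin 2))
      ((p : Fin 2) → (Fin 2 × Fin 2) × (Fin 2 × Fin 2)) ℂ :=
  fun x y =>
    8 * (omega4 (x 0).1 (y 0).1 * rhoCorr4 ((x 0).2, (x 1).1) ((y 0).2, (y 1).1)
          * omega4 (x 1).2 (y 1).2
       + omega4 (x 0).2 (y 0).2 * rhoCorr4 ((x 0).1, (x 1).2) ((y 0).1, (y 1).2)
          * omega4 (x 1).1 (y 1).1)

/-- Partial trace over the double-primed systems `a₁'', a₂'', b₁'', b₂''` (the second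
qubit of each of the four two-qubit systems). -/
noncomputable def ptraceSecond
    (W : Matrix ((p : Fin 2) → (Fin 2 × Fin 2) × (Fin 2 × Fin 2))
      ((p : Fin 2) → (Fin 2 × Fin 2) × (Fin 2 × Fin 2)) ℂ) :
    Matrix ((p : Fin 2) → Fin 2 × Fin 2) ((p : Fin 2) → Fin 2 × Fin 2) ℂ :=
  fun x y => ∑ e : (p : Fin 2) → Fin 2 × Fin 2,
    W (fun p => (((x p).1, (e p).1), ((x p).2, (e p).2)))
      (fun p => (((y p).1, (e p).1), ((y p).2, (e p).2)))

/-- Partial trace over the primed systems `a₁', a₂', b₁', b₂'` (the first qubit of each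
of the four two-qubit systems). -/
noncomputable def ptraceFirst
    (W : Matrix ((p : Fin 2) → (Fin 2 × Fin 2) × (Fin 2 × Fin 2))
      ((p : Fin 2) → (Fin 2 × Fin 2) × (Fin 2 × Fin 2)) ℂ) :
    Matrix ((p : Fin 2) → Fin 2 × Fin 2) ((p : Fin 2) → Fin 2 × Fin 2) ℂ :=
  fun x y => ∑ e : (p : Fin 2) → Fin 2 × Fin 2,
    W (fun p => (((e p).1, (x p).1), ((e p).2, (x p).2)))
      (fun p => (((e p).1, (y p).1), ((e p).2, (y p).2)))


set_option linter.dupNamespace false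

lemma pauli_ortho (i j : Fin 4) :
    ∑ a : Fin 2, ∑ b : Fin 2, pauli i a b * pauli j b a = if i = j then 2 else 0 := by
  fin_cases i <;> fin_cases j <;>
    simp [pauli, Fin.sum_univ_two, Complex.ext_iff] <;> norm_num

lemma sig_ortho (i j : Fin 4 × Fin 4) :
    ∑ a : Fin 2 × Fin 2, ∑ b : Fin 2 × Fin 2,
      prodBasis pauli pauli i a b * prodBasis pauli pauli j b a
      = if i = j then 4 else 0 := by
  have key : ∑ a : Fin 2 × Fin 2, ∑ b : Fin 2 × Fin 2,
      prodBasis pauli pauli i a b * prodBasis pauli pauli j b a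
      = (∑ a : Fin 2, ∑ b : Fin 2, pauli i.1 a b * pauli j.1 b a)
        * (∑ a : Fin 2, ∑ b : Fin 2, pauli i.2 a b * pauli j.2 b a) := by
    simp only [prodBasis, Matrix.kroneckerMap_apply, Fintype.sum_prod_type, Fin.sum_univ_two]
    ring
  rw [key, pauli_ortho, pauli_ortho]
  rcases i with ⟨i1, i2⟩; rcases j with ⟨j1, j2⟩
  by_cases h1 : i1 = j1 <;> by_cases h2 : i2 = j2 <;>
    simp [h1, h2, Prod.ext_iff] <;> norm_num

lemma split2' {γ δ : Type*} [Fintype γ] [Fintype δ] (X X' : γ → γ → ℂ) (Y Y' : δ → δ → ℂ) :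
    ∑ a : γ × δ, ∑ b : γ × δ, (X a.1 b.1 * Y a.2 b.2) * (X' b.1 a.1 * Y' b.2 a.2)
      = (∑ a, ∑ b, X a b * X' b a) * (∑ a, ∑ b, Y a b * Y' b a) := by
  simp_rw [Fintype.sum_prod_type, Finset.sum_mul_sum]
  exact Finset.sum_congr rfl fun _ _ => Finset.sum_congr rfl fun _ _ =>
    Finset.sum_congr rfl fun _ _ => Finset.sum_congr rfl fun _ _ => by ring

/-- summand for the per-party orthogonality computation -/
noncomputable def Fq (t s : (p : Fin 2) → (Fin 4 × Fin 4) × (Fin 4 × Fin 4)) (p : Fin 2)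
    (a b : (Fin 2 × Fin 2) × (Fin 2 × Fin 2)) : ℂ :=
  (prodBasis pauli pauli (t p).1 a.1 b.1 * prodBasis pauli pauli (t p).2 a.2 b.2)
    * (prodBasis pauli pauli (s p).1 b.1 a.1 * prodBasis pauli pauli (s p).2 b.2 a.2)

lemma party_ortho (t s : (p : Fin 2) → (Fin 4 × Fin 4) × (Fin 4 × Fin 4)) (p : Fin 2) :
    ∑ a : (Fin 2 × Fin 2) × (Fin 2 × Fin 2), ∑ b, Fq t s p a b
      = if t p = s p then 16 else 0 := by
  unfold Fq
  rw [split2' (prodBasis pauli pauli (t p).1) (prodBasis pauli pauli (s p).1)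
      (prodBasis pauli pauli (t p).2) (prodBasis pauli pauli (s p).2)]
  rw [sig_ortho, sig_ortho]
  by_cases h1 : (t p).1 = (s p).1 <;> by_cases h2 : (t p).2 = (s p).2 <;>
    simp [h1, h2, Prod.ext_iff] <;> norm_num

lemma hsTerm_ortho (t s : (p : Fin 2) → (Fin 4 × Fin 4) × (Fin 4 × Fin 4)) :
    ∑ x : (p : Fin 2) → (Fin 2 × Fin 2) × (Fin 2 × Fin 2), ∑ y,
      hsTerm (fun _ => prodBasis pauli pauli) (fun _ => prodBasis pauli pauli) t x y *
      hsTerm (fun _ => prodBasis pauli pauli) (fun _ => prodBasis pauli pauli) s y x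
      = if t = s then 256 else 0 := by
  have h1 : ∀ x y : (p : Fin 2) → (Fin 2 × Fin 2) × (Fin 2 × Fin 2),
      hsTerm (fun _ => prodBasis pauli pauli) (fun _ => prodBasis pauli pauli) t x y *
      hsTerm (fun _ => prodBasis pauli pauli) (fun _ => prodBasis pauli pauli) s y x
      = ∏ p, Fq t s p (x p) (y p) := by
    intro x y
    rw [hsTerm, hsTerm, ← Finset.prod_mul_distrib]
    exact Finset.prod_congr rfl fun p _ => rfl
  simp_rw [h1]
  have h2 : ∀ x : (p : Fin 2) → (Fin 2 × Fin 2) × (Fin 2 × Fin 2),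
      ∑ y : (p : Fin 2) → (Fin 2 × Fin 2) × (Fin 2 × Fin 2), ∏ p, Fq t s p (x p) (y p)
      = ∏ p, ∑ b, Fq t s p (x p) b := by
    intro x
    have := Finset.prod_univ_sum (fun _ : Fin 2 => (Finset.univ : Finset ((Fin 2 × Fin 2) × (Fin 2 × Fin 2))))
      (fun p b => Fq t s p (x p) b)
    simpa [Fintype.piFinset_univ] using this.symm
  simp_rw [h2]
  have h3 : ∑ x : (p : Fin 2) → (Fin 2 × Fin 2) × (Fin 2 × Fin 2),
      ∏ p, (∑ b, Fq t s p (x p) b) = ∏ p, ∑ a, ∑ b, Fq t s p a b := by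
    have := Finset.prod_univ_sum (fun _ : Fin 2 => (Finset.univ : Finset ((Fin 2 × Fin 2) × (Fin 2 × Fin 2))))
      (fun p a => ∑ b, Fq t s p a b)
    simpa [Fintype.piFinset_univ] using this.symm
  rw [h3]
  simp_rw [party_ortho t s]
  rw [Fin.prod_univ_two]
  by_cases e0 : t 0 = s 0 <;> by_cases e1 : t 1 = s 1 <;>
    simp [e0, e1, funext_iff, Fin.forall_fin_two] <;> try norm_num

/-- identity multi-index -/
def tId : (p : Fin 2) → Fin 4 × Fin 4 := fun _ => (0, 0)
/-- index of `σ₃^{x₂} ⊗ σ₃^{y₁}` -/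
def tA : (p : Fin 2) → Fin 4 × Fin 4 := ![(0, 3), (3, 0)]
/-- index of `σ₃^{x₁} ⊗ σ₃^{y₂}` -/
def tB : (p : Fin 2) → Fin 4 × Fin 4 := ![(3, 0), (0, 3)]

/-- Pauli coefficients of `Wq` -/
noncomputable def wq : ((p : Fin 2) → Fin 4 × Fin 4) → ℝ :=
  fun t => if t = tId then (4:ℝ)⁻¹ else if t = tA then (8:ℝ)⁻¹ else if t = tB then (8:ℝ)⁻¹ else 0

lemma wq_cast (t : (p : Fin 2) → Fin 4 × Fin 4) :
    (wq t : ℂ) = (if t = tId then (4:ℂ)⁻¹ else 0) + (if t = tA then (8:ℂ)⁻¹ else 0)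
      + (if t = tB then (8:ℂ)⁻¹ else 0) := by
  by_cases h1 : t = tId
  · subst h1
    simp [wq, show tId ≠ tA from by decide, show tId ≠ tB from by decide]
  · by_cases h2 : t = tA
    · subst h2
      simp [wq, h1, show tA ≠ tB from by decide]
    · by_cases h3 : t = tB
      · subst h3; simp [wq, h1, h2]
      · simp [wq, h1, h2, h3]

lemma Wq_expand : Wq = expand (fun _ : Fin 2 => pauli) (fun _ : Fin 2 => pauli) wq := by
  funext x y
  rw [expand, Matrix.sum_apply]
  simp_rw [Matrix.smul_apply, smul_eq_mul, wq_cast, add_mul, Finset.sum_add_distrib,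
    ite_mul, zero_mul, Finset.sum_ite_eq' Finset.univ, Finset.mem_univ, if_pos]
  simp only [Wq, omega2, rhoCorr2, hsTerm, tId, tA, tB, pauli, Fin.prod_univ_two,
    Matrix.smul_apply, Matrix.add_apply, Matrix.kroneckerMap_apply, Matrix.one_apply,
    smul_eq_mul, Matrix.cons_val_zero, Matrix.cons_val_one, Matrix.head_cons,
    Matrix.cons_val', Matrix.cons_val_fin_one, Matrix.empty_val']
  ring
section Statement9

/-- The multi-index of the Pauli term `σ₃^{a₂'} ⊗ σ₃^{a₁''} ⊗ σ₃^{b₁'} ⊗ σ₃^{b₂''}`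
(identity on all other systems) for the combined parties `A = A'A''` (party `0`, input
`a₁ = a₁'a₁''`, output `a₂ = a₂'a₂''`) and `B = B'B''` (party `1`): on `A` the input
index is `(0, 3)` and the output index `(3, 0)`; on `B` the input index is `(3, 0)` and
the output index `(0, 3)`. This is a term of type `a₁a₂b₁b₂`. -/
def sigTerm : (p : Fin 2) → (Fin 4 × Fin 4) × (Fin 4 × Fin 4) :=
  ![((0, 3), (3, 0)), ((3, 0), (0, 3))]


/-- reindexing equivalence for product terms -/
def combineEquiv : (((p : Fin 2) → Fin 4 × Fin 4) × ((p : Fin 2) → Fin 4 × Fin 4))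
    ≃ ((p : Fin 2) → (Fin 4 × Fin 4) × (Fin 4 × Fin 4)) where
  toFun ts := combineTerm ts.1 ts.2
  invFun u := (fun p => ((u p).1.1, (u p).2.1), fun p => ((u p).1.2, (u p).2.2))
  left_inv ts := rfl
  right_inv u := rfl

lemma prod_expand (w z : ((p : Fin 2) → Fin 4 × Fin 4) → ℝ) :
    prodOp (expand (fun _ : Fin 2 => pauli) (fun _ : Fin 2 => pauli) w)
           (expand (fun _ : Fin 2 => pauli) (fun _ : Fin 2 => pauli) z)
      = expand (fun _ : Fin 2 => prodBasis pauli pauli) (fun _ : Fin 2 => prodBasis pauli pauli)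
          (prodCoeffs w z) := by
  funext x y
  simp only [prodOp, expand, Matrix.sum_apply, Matrix.smul_apply, smul_eq_mul]
  rw [Finset.sum_mul_sum, ← Equiv.sum_comp combineEquiv, Fintype.sum_prod_type]
  refine Finset.sum_congr rfl fun t _ => Finset.sum_congr rfl fun s _ => ?_
  have hc : prodCoeffs w z (combineEquiv (t, s)) = w t * z s := rfl
  rw [hc]
  have he : combineEquiv (t, s) = combineTerm t s := rfl
  rw [he]
  simp only [hsTerm, combineTerm, prodBasis, Matrix.kroneckerMap_apply, Fin.prod_univ_two]
  push_cast
  ring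

lemma sum_rotate {A B C : Type*} [Fintype A] [Fintype B] [Fintype C] (f : A → B → C → ℂ) :
    ∑ x : A, ∑ y : B, ∑ t : C, f x y t = ∑ t : C, ∑ x : A, ∑ y : B, f x y t :=
  (Finset.sum_congr rfl fun _ _ => Finset.sum_comm).trans Finset.sum_comm

lemma F_expand (v : ((p : Fin 2) → (Fin 4 × Fin 4) × (Fin 4 × Fin 4)) → ℝ) :
    ∑ x : (p : Fin 2) → (Fin 2 × Fin 2) × (Fin 2 × Fin 2), ∑ y,
      (expand (fun _ : Fin 2 => prodBasis pauli pauli) (fun _ : Fin 2 => prodBasis pauli pauli) v) x y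
        * hsTerm (fun _ : Fin 2 => prodBasis pauli pauli) (fun _ : Fin 2 => prodBasis pauli pauli) sigTerm y x
      = 256 * (v sigTerm : ℂ) := by
  simp only [expand, Matrix.sum_apply, Matrix.smul_apply, smul_eq_mul]
  simp_rw [Finset.sum_mul, mul_assoc]
  rw [sum_rotate]
  simp_rw [← Finset.mul_sum]
  simp_rw [hsTerm_ortho]
  simp [Finset.sum_ite_eq', mul_ite, mul_zero]
  ring

lemma sig_fst : (fun p => ((sigTerm p).1.1, (sigTerm p).2.1)) = tA := by
  funext p; fin_cases p <;> rfl

lemma sig_snd : (fun p => ((sigTerm p).1.2, (sigTerm p).2.2)) = tB := by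
  funext p; fin_cases p <;> rfl

lemma wq_tA : wq tA = (8:ℝ)⁻¹ := by
  rw [wq, if_neg (by decide), if_pos rfl]

lemma wq_tB : wq tB = (8:ℝ)⁻¹ := by
  rw [wq, if_neg (by decide), if_neg (by decide), if_pos rfl]

lemma prodCoeffs_sig : prodCoeffs wq wq sigTerm = (64:ℝ)⁻¹ := by
  show wq (fun p => ((sigTerm p).1.1, (sigTerm p).2.1))
      * wq (fun p => ((sigTerm p).1.2, (sigTerm p).2.2)) = (64:ℝ)⁻¹
  rw [sig_fst, sig_snd, wq_tA, wq_tB]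
  norm_num

lemma prodOp_expand : prodOp Wq Wq
    = expand (fun _ : Fin 2 => prodBasis pauli pauli) (fun _ : Fin 2 => prodBasis pauli pauli)
        (prodCoeffs wq wq) := by
  rw [Wq_expand, prod_expand]

lemma sig_nontrivial : NontrivialTerm sigTerm := by
  refine ⟨0, fun h => ?_⟩
  exact absurd h.1 (by decide)

lemma sig_not_inType : ∀ p, ¬ InTypeAt sigTerm p := by
  intro p hp
  fin_cases p
  · exact absurd hp.2 (by decide)
  · exact absurd hp.2 (by decide)

/-- Let `W^{a'b'}` and `W^{a''b''}` both be copies of the two-party qubit process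
`W = (d_O/2)(ω^{x₁} ⊗ ρ_∼^{x₂y₁} ⊗ ω^{y₂} + ω^{x₂} ⊗ ρ_∼^{x₁y₂} ⊗ ω^{y₁})` with
`ω = 𝟙/2` and `ρ_∼ = (𝟙⊗𝟙 + σ₃⊗σ₃)/4`. Then the tensor product
`W^{a'b'} ⊗ W^{a''b''}`, regarded as an operator for the combined parties `A = A'A''`
and `B = B'B''`, has a nonzero coefficient on the Pauli term
`σ₃^{a₂'} ⊗ σ₃^{a₁''} ⊗ σ₃^{b₁'} ⊗ σ₃^{b₂''}`, which is a nontrivial term of type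
`a₁a₂b₁b₂` (in type on neither combined party); consequently `W^{a'b'} ⊗ W^{a''b''}`
is not a valid process. -/
theorem statement9 :
    (∃ w' : ((p : Fin 2) → (Fin 4 × Fin 4) × (Fin 4 × Fin 4)) → ℝ,
        prodOp Wq Wq = expand (fun _ : Fin 2 => prodBasis pauli pauli)
            (fun _ : Fin 2 => prodBasis pauli pauli) w' ∧
        w' sigTerm ≠ 0) ∧
    NontrivialTerm sigTerm ∧
    (∀ p, ¬ InTypeAt sigTerm p) ∧
    ¬ IsProcess (fun _ : Fin 2 => prodBasis pauli pauli)
        (fun _ : Fin 2 => prodBasis pauli pauli) (prodOp Wq Wq) := by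
  refine ⟨⟨prodCoeffs wq wq, prodOp_expand, by rw [prodCoeffs_sig]; norm_num⟩,
    sig_nontrivial, sig_not_inType, ?_⟩
  rintro ⟨w, _hpsd, _htr, hexp, hog⟩
  have hF1 := F_expand w
  rw [← hexp] at hF1
  have hF2 := F_expand (prodCoeffs wq wq)
  rw [← prodOp_expand] at hF2
  have h256 : (256 : ℂ) ≠ 0 := by norm_num
  have hww : (w sigTerm : ℂ) = (prodCoeffs wq wq sigTerm : ℂ) :=
    mul_left_cancel₀ h256 (hF1.symm.trans hF2)
  have hw : w sigTerm = prodCoeffs wq wq sigTerm := by exact_mod_cast hww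
  have hne : w sigTerm ≠ 0 := by
    rw [hw, prodCoeffs_sig]; norm_num
  obtain ⟨p, hp⟩ := hog sigTerm hne sig_nontrivial
  exact sig_not_inType p hp

end Statement9

end ProcessPaper
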